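/- arXiv:math/0510313 — 2 statements merged into one kernel-verified Lean document; each statement's English description precedes it below -/
import Mathlib

section
/- Let φ: (M³,g) → (N²,h) be a submersive semi-conformal map with dilation λ. Then the mean curvature of the horizontal distribution H, given by (1/2) g(U, ∇_{e₁}e₁ + ∇_{e₂}e₂) for any orthonormal horizontal frame {e₁,e₂}, equals U(ln λ), where U is the unit vertical vector field. -/
/-
Write `g^H = g - U♭ ⊗ U♭` for the horizontal part of `g`. Semi-conformality says exactly that
`φ*h = λ² g^H`, and `φ*h` is invariant under the flow of the vertical field `U`, so
`L_U (λ² g^H) = 0`. Evaluated on a unit horizontal field `e` (where `U♭(e) = 0`) this gives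
`(L_U g)(e, e) = -2 U(ln λ)`, while the Koszul formula gives `g(U, ∇_e e) = -½ (L_U g)(e, e)`
because `g(e, U)` vanishes identically. Summing over `e₁, e₂` gives the claim.
-/
open scoped BigOperators

noncomputable section

/-- Partial derivative of `f` in the `i`-th coordinate direction. -/
def pd {n : ℕ} (f : (Fin n → ℝ) → ℝ) (i : Fin n) (x : Fin n → ℝ) : ℝ :=
  fderiv ℝ f x (Pi.single i 1)

/-- Pointwise inverse of a metric (the components `g^{ij}`). -/
def ginv {n : ℕ} (g : (Fin n → ℝ) → Matrix (Fin n) (Fin n) ℝ) (x : Fin n → ℝ) :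
    Matrix (Fin n) (Fin n) ℝ := (g x)⁻¹

/-- A smooth Riemannian metric in coordinates. -/
def IsMetric {n : ℕ} (g : (Fin n → ℝ) → Matrix (Fin n) (Fin n) ℝ) : Prop :=
  (∀ i j, ContDiff ℝ (⊤ : ℕ∞) fun x => g x i j) ∧ ∀ x, (g x).IsSymm ∧ (g x).PosDef

/-- A smooth vector field (or componentwise-smooth family). -/
def SmoothVF {n : ℕ} (X : (Fin n → ℝ) → Fin n → ℝ) : Prop :=
  ∀ k, ContDiff ℝ (⊤ : ℕ∞) fun x => X x k

/-- Christoffel symbols `Γ^k_{ij}` of the metric `g`. -/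
def christoffel {n : ℕ} (g : (Fin n → ℝ) → Matrix (Fin n) (Fin n) ℝ)
    (k i j : Fin n) (x : Fin n → ℝ) : ℝ :=
  (1 / 2) * ∑ l, ginv g x k l *
    (pd (fun y => g y l j) i x + pd (fun y => g y l i) j x - pd (fun y => g y i j) l x)

/-- Covariant derivative `(∇_X Y)^k` of the Levi-Civita connection of `g`. -/
def covD {n : ℕ} (g : (Fin n → ℝ) → Matrix (Fin n) (Fin n) ℝ)
    (X Y : (Fin n → ℝ) → Fin n → ℝ) (x : Fin n → ℝ) (k : Fin n) : ℝ :=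
  (∑ i, X x i * pd (fun y => Y y k) i x) + ∑ i, ∑ j, christoffel g k i j x * X x i * Y x j

/-- The Lie bracket of vector fields, `[X,Y]^k = X^i ∂_i Y^k - Y^i ∂_i X^k`. -/
def bracket {n : ℕ} (X Y : (Fin n → ℝ) → Fin n → ℝ) (x : Fin n → ℝ) (k : Fin n) : ℝ :=
  ∑ i, (X x i * pd (fun y => Y y k) i x - Y x i * pd (fun y => X y k) i x)

/-- `φ : (M³,g) → (N²,h)` is semi-conformal with dilation `λ`, in the local-coordinate
characterization `g^{ij} φ^α_i φ^β_j = λ² h^{αβ}`. -/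
def SemiConformal (g : (Fin 3 → ℝ) → Matrix (Fin 3) (Fin 3) ℝ)
    (h : (Fin 2 → ℝ) → Matrix (Fin 2) (Fin 2) ℝ)
    (φ : (Fin 3 → ℝ) → Fin 2 → ℝ) (lam : (Fin 3 → ℝ) → ℝ) : Prop :=
  ∀ x α β, (∑ i, ∑ j, ginv g x i j * pd (fun y => φ y α) i x * pd (fun y => φ y β) j x)
    = lam x ^ 2 * ginv h (φ x) α β

/-- A vector field is vertical when it lies in `ker dφ`. -/
def Vertical (φ : (Fin 3 → ℝ) → Fin 2 → ℝ) (U : (Fin 3 → ℝ) → Fin 3 → ℝ) : Prop :=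
  ∀ x α, (∑ i, pd (fun y => φ y α) i x * U x i) = 0

/-- A vector field of unit length for `g`. -/
def UnitField (g : (Fin 3 → ℝ) → Matrix (Fin 3) (Fin 3) ℝ)
    (U : (Fin 3 → ℝ) → Fin 3 → ℝ) : Prop :=
  ∀ x, (∑ i, ∑ j, g x i j * U x i * U x j) = 1

/-- The dual 1-form `X♭ = g(X,·)`. -/
def flat (g : (Fin 3 → ℝ) → Matrix (Fin 3) (Fin 3) ℝ)
    (X : (Fin 3 → ℝ) → Fin 3 → ℝ) (j : Fin 3) (x : Fin 3 → ℝ) : ℝ :=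
  ∑ k, g x j k * X x k

/-- Horizontal projection (relative to the unit vertical field `U`):
`H X = X - g(X,U) U`. -/
def Hproj (g : (Fin 3 → ℝ) → Matrix (Fin 3) (Fin 3) ℝ)
    (U X : (Fin 3 → ℝ) → Fin 3 → ℝ) (x : Fin 3 → ℝ) (k : Fin 3) : ℝ :=
  X x k - (∑ i, ∑ j, g x i j * X x i * U x j) * U x k

/-- The mean curvature vector `μ = ∇_U U` of the fibres (`U` the unit vertical field). -/
def meanCurv (g : (Fin 3 → ℝ) → Matrix (Fin 3) (Fin 3) ℝ)
    (U : (Fin 3 → ℝ) → Fin 3 → ℝ) (x : Fin 3 → ℝ) (k : Fin 3) : ℝ :=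
  covD g U U x k

/-- Lie derivative of the metric: `(L_E g)_{ij} = E^k ∂_k g_{ij} + g_{kj} ∂_i E^k + g_{ik} ∂_j E^k`. -/
def lieD {n : ℕ} (g : (Fin n → ℝ) → Matrix (Fin n) (Fin n) ℝ)
    (E : (Fin n → ℝ) → Fin n → ℝ) (i j : Fin n) (x : Fin n → ℝ) : ℝ :=
  (∑ k, E x k * pd (fun y => g y i j) k x)
    + (∑ k, g x k j * pd (fun y => E y k) i x)
    + ∑ k, g x i k * pd (fun y => E y k) j x

open Matrix

section LinearAlgebra

variable {ι κ : Type*} [Fintype ι]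

lemma sum_comm_rev {α β γ M : Type*} [Fintype α] [Fintype β] [Fintype γ] [AddCommMonoid M]
    (f : α → β → γ → M) : ∑ a, ∑ b, ∑ c, f a b c = ∑ c, ∑ b, ∑ a, f a b c := by
  simp only [Finset.sum_comm (s := Finset.univ) (t := Finset.univ) (f := fun b c => f _ b c)]
  rw [Finset.sum_comm]
  simp only [Finset.sum_comm (s := Finset.univ) (t := Finset.univ) (f := fun a b => f a b _)]

lemma sum_sum_mul_mul_eq_dotProduct_mulVec (M : Matrix ι ι ℝ) (v w : ι → ℝ) :
    ∑ i, ∑ j, M i j * v i * w j = v ⬝ᵥ M *ᵥ w := by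
  rw [dot_mulVec_eq_sum_sum, Finset.sum_comm]
  exact Finset.sum_congr rfl fun i _ => Finset.sum_congr rfl fun j _ => by ring

lemma mul_mul_transpose_apply (A B : Matrix κ ι ℝ) (M : Matrix ι ι ℝ) (α β : κ) :
    (A * M * Bᵀ) α β = ∑ i, ∑ j, M i j * A α i * B β j := by
  rw [sum_sum_mul_mul_eq_dotProduct_mulVec, Matrix.mul_assoc, mul_apply, dotProduct]
  simp only [mul_apply, transpose_apply, mulVec, dotProduct]

lemma transpose_mul_inv_of_mul_mul_transpose_eq_one [DecidableEq ι] {R G : Matrix ι ι ℝ}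
    (h : R * G * Rᵀ = 1) : Rᵀ * R = G⁻¹ := by
  rw [Matrix.mul_assoc] at h
  have h' : G * (Rᵀ * R) = 1 := by rw [← Matrix.mul_assoc]; exact mul_eq_one_comm.mp h
  exact (inv_eq_right_inv h').symm

lemma transpose_mul_mul_eq_smul_one [Fintype κ] [DecidableEq κ] {D Hm Hi : Matrix κ κ ℝ} {c : ℝ}
    (hc : c ≠ 0) (hD : D * Dᵀ = c • Hi) (hH : Hm * Hi = 1) : Dᵀ * Hm * D = c • 1 := by
  have hright : D * (c⁻¹ • (Dᵀ * Hm)) = 1 := by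
    rw [Matrix.mul_smul, ← Matrix.mul_assoc, hD, smul_mul, smul_smul, inv_mul_cancel₀ hc,
      one_smul, mul_eq_one_comm.mp hH]
  have hleft := mul_eq_one_comm.mp hright
  rw [smul_mul] at hleft
  rw [← one_smul ℝ (Dᵀ * Hm * D), ← mul_inv_cancel₀ hc, ← smul_smul, hleft]

lemma transpose_mul_mul_eq_of_mul_inv_mul_transpose_eq [DecidableEq ι] [Fintype κ]
    [DecidableEq κ] {G : Matrix ι ι ℝ} {F : Matrix ι κ ℝ} {u : ι → ℝ} {B : Matrix κ ι ℝ}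
    {Hm Hi : Matrix κ κ ℝ} {l : ℝ} (hl : l ≠ 0) (hGs : Gᵀ = G) (hG : G * G⁻¹ = 1)
    (hF : F * Fᵀ + vecMulVec u u = G⁻¹) (hBu : B *ᵥ u = 0) (hB : B * G⁻¹ * Bᵀ = l • Hi)
    (hH : Hm * Hi = 1) :
    Bᵀ * Hm * B = l • (G - vecMulVec (G *ᵥ u) (G *ᵥ u)) := by
  have hBuu : B * vecMulVec u u = 0 := by
    rw [mul_vecMulVec, hBu]
    ext
    simp
  have hFF : F * Fᵀ = G⁻¹ - vecMulVec u u := eq_sub_of_add_eq hF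
  have hD : B * F * (B * F)ᵀ = l • Hi := by
    rw [transpose_mul, Matrix.mul_assoc, ← Matrix.mul_assoc F, hFF, ← Matrix.mul_assoc,
      Matrix.mul_sub, hBuu, sub_zero, hB]
  have hBD : B = B * F * Fᵀ * G := by
    calc B = B * (G⁻¹ * G) := by rw [mul_eq_one_comm.mp hG, Matrix.mul_one]
      _ = B * F * Fᵀ * G := by
        rw [← hF, ← Matrix.mul_assoc, Matrix.mul_add, hBuu, add_zero, Matrix.mul_assoc B F]
  calc Bᵀ * Hm * B = G * F * ((B * F)ᵀ * Hm * (B * F)) * Fᵀ * G := by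
        conv_lhs => rw [hBD]
        simp only [transpose_mul, transpose_transpose, hGs, Matrix.mul_assoc]
    _ = l • (G * (F * Fᵀ) * G) := by
        rw [transpose_mul_mul_eq_smul_one hl hD hH]
        simp only [Matrix.mul_smul, Matrix.smul_mul, Matrix.mul_one, Matrix.mul_assoc]
    _ = l • (G - vecMulVec (G *ᵥ u) (G *ᵥ u)) := by
        rw [hFF, Matrix.mul_sub, Matrix.sub_mul, hG, Matrix.one_mul, mul_vecMulVec, vecMulVec_mul,
          ← mulVec_transpose, hGs]

lemma dotProduct_mulVec_comm_of_transpose_eq {M : Matrix ι ι ℝ} (hM : Mᵀ = M)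
    (v w : ι → ℝ) : v ⬝ᵥ M *ᵥ w = w ⬝ᵥ M *ᵥ v := by
  rw [dotProduct_mulVec, ← mulVec_transpose, hM, dotProduct_comm]

end LinearAlgebra

lemma horizontal_frame_completeness {G : Matrix (Fin 3) (Fin 3) ℝ} (hGs : Gᵀ = G)
    {u e₁ e₂ : Fin 3 → ℝ} (huu : u ⬝ᵥ G *ᵥ u = 1) (h₁₁ : e₁ ⬝ᵥ G *ᵥ e₁ = 1)
    (h₂₂ : e₂ ⬝ᵥ G *ᵥ e₂ = 1) (h₁₂ : e₁ ⬝ᵥ G *ᵥ e₂ = 0) (h₁u : e₁ ⬝ᵥ G *ᵥ u = 0)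
    (h₂u : e₂ ⬝ᵥ G *ᵥ u = 0) :
    (of ![e₁, e₂])ᵀ * of ![e₁, e₂] + vecMulVec u u = G⁻¹ := by
  have hcomm := dotProduct_mulVec_comm_of_transpose_eq hGs
  have horthonormal : of ![u, e₁, e₂] * G * (of ![u, e₁, e₂])ᵀ = 1 := by
    ext a b
    rw [mul_mul_apply, transpose_transpose]
    have hrow : ∀ c, of ![u, e₁, e₂] c = ![u, e₁, e₂] c := fun _ => rfl
    fin_cases a <;> fin_cases b <;> simp only [hrow] <;> simp <;>
      first | assumption | (rw [hcomm]; assumption)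
  rw [← transpose_mul_inv_of_mul_mul_transpose_eq_one horthonormal]
  ext i j
  simp [mul_apply, Fin.sum_univ_succ, vecMulVec_apply]
  ring

section DirectionalDerivative

variable {n m : ℕ}

def dirDeriv (X : (Fin n → ℝ) → Fin n → ℝ) (f : (Fin n → ℝ) → ℝ) (x : Fin n → ℝ) : ℝ :=
  ∑ k, X x k * pd f k x

def jacobian (F : (Fin n → ℝ) → Fin m → ℝ) (x : Fin n → ℝ) : Matrix (Fin m) (Fin n) ℝ :=
  Matrix.of fun k i => pd (fun y => F y k) i x

def vecDirDeriv {κ : Type*} (X : (Fin n → ℝ) → Fin n → ℝ) (F : (Fin n → ℝ) → κ → ℝ)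
    (x : Fin n → ℝ) : κ → ℝ :=
  fun k => dirDeriv X (fun y => F y k) x

def matDirDeriv {ι κ : Type*} (X : (Fin n → ℝ) → Fin n → ℝ)
    (A : (Fin n → ℝ) → Matrix ι κ ℝ) (x : Fin n → ℝ) : Matrix ι κ ℝ :=
  Matrix.of fun i j => dirDeriv X (fun y => A y i j) x

lemma dirDeriv_eq_fderiv (X : (Fin n → ℝ) → Fin n → ℝ) (f : (Fin n → ℝ) → ℝ)
    (x : Fin n → ℝ) : dirDeriv X f x = fderiv ℝ f x (X x) := by
  conv_rhs => rw [pi_eq_sum_univ' (X x)]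
  simp [dirDeriv, pd, map_sum]

lemma dirDeriv_const (X : (Fin n → ℝ) → Fin n → ℝ) (c : ℝ) (x : Fin n → ℝ) :
    dirDeriv X (fun _ => c) x = 0 := by
  simp [dirDeriv_eq_fderiv]

lemma dirDeriv_mul (X : (Fin n → ℝ) → Fin n → ℝ) {f g : (Fin n → ℝ) → ℝ} {x : Fin n → ℝ}
    (hf : DifferentiableAt ℝ f x) (hg : DifferentiableAt ℝ g x) :
    dirDeriv X (fun y => f y * g y) x = dirDeriv X f x * g x + f x * dirDeriv X g x := by
  simp only [dirDeriv_eq_fderiv, fderiv_fun_mul hf hg, _root_.add_apply, _root_.smul_apply,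
    smul_eq_mul]
  ring

lemma dirDeriv_sub (X : (Fin n → ℝ) → Fin n → ℝ) {f g : (Fin n → ℝ) → ℝ} {x : Fin n → ℝ}
    (hf : DifferentiableAt ℝ f x) (hg : DifferentiableAt ℝ g x) :
    dirDeriv X (fun y => f y - g y) x = dirDeriv X f x - dirDeriv X g x := by
  simp only [dirDeriv_eq_fderiv, fderiv_fun_sub hf hg, _root_.sub_apply]

lemma dirDeriv_sum (X : (Fin n → ℝ) → Fin n → ℝ) {ι : Type*} (s : Finset ι)
    {f : ι → (Fin n → ℝ) → ℝ} {x : Fin n → ℝ} (hf : ∀ l ∈ s, DifferentiableAt ℝ (f l) x) :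
    dirDeriv X (fun y => ∑ l ∈ s, f l y) x = ∑ l ∈ s, dirDeriv X (f l) x := by
  simp only [dirDeriv_eq_fderiv, fderiv_fun_sum hf, _root_.sum_apply]

lemma pd_eq_dirDeriv (f : (Fin n → ℝ) → ℝ) (i : Fin n) (x : Fin n → ℝ) :
    pd f i x = dirDeriv (fun _ => Pi.single i 1) f x := by
  rw [dirDeriv_eq_fderiv]
  rfl

lemma pd_pd_comm {f : (Fin n → ℝ) → ℝ} (hf : ContDiff ℝ 2 f) (i k : Fin n) (x : Fin n → ℝ) :
    pd (fun y => pd f k y) i x = pd (fun y => pd f i y) k x := by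
  have hd : DifferentiableAt ℝ (fderiv ℝ f) x :=
    ((hf.fderiv_right (m := 1) (by norm_num)).differentiable (by norm_num)).differentiableAt
  have hsymm : IsSymmSndFDerivAt ℝ f x := hf.contDiffAt.isSymmSndFDerivAt (by simp)
  have hpd : ∀ (j : Fin n) (v : Fin n → ℝ),
      fderiv ℝ (fun y => fderiv ℝ f y v) x (Pi.single j 1)
        = fderiv ℝ (fderiv ℝ f) x (Pi.single j 1) v := by
    intro j v
    rw [fderiv_clm_apply hd (differentiableAt_const v)]
    simp
  exact (hpd i _).trans ((hsymm _ _).trans (hpd k _).symm)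

lemma dirDeriv_log {X : (Fin n → ℝ) → Fin n → ℝ} {f : (Fin n → ℝ) → ℝ} {x : Fin n → ℝ}
    (hf : DifferentiableAt ℝ f x) (hx : f x ≠ 0) :
    dirDeriv X (fun y => Real.log (f y)) x = dirDeriv X f x / f x := by
  rw [dirDeriv_eq_fderiv, (hf.hasFDerivAt.log hx).fderiv, dirDeriv_eq_fderiv]
  simp [div_eq_inv_mul]

lemma differentiable_pd {f : (Fin n → ℝ) → ℝ} (hf : ContDiff ℝ 2 f) (i : Fin n) :
    Differentiable ℝ (fun y => pd f i y) :=
  ((hf.fderiv_right (m := 1) (by norm_num)).clm_apply contDiff_const).differentiable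
    (by norm_num)

lemma fderiv_apply_eq_vecDirDeriv {F : (Fin n → ℝ) → Fin m → ℝ} {x : Fin n → ℝ}
    (hF : ∀ α, DifferentiableAt ℝ (fun y => F y α) x) (X : (Fin n → ℝ) → Fin n → ℝ) :
    fderiv ℝ F x (X x) = vecDirDeriv X F x := by
  rw [fderiv_pi hF]
  ext α
  simp [vecDirDeriv, dirDeriv_eq_fderiv]

lemma dirDeriv_comp_eq_zero {φ : (Fin n → ℝ) → Fin m → ℝ} {F : (Fin m → ℝ) → ℝ}
    {X : (Fin n → ℝ) → Fin n → ℝ} {x : Fin n → ℝ}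
    (hφ : ∀ α, DifferentiableAt ℝ (fun y => φ y α) x) (hF : DifferentiableAt ℝ F (φ x))
    (hvert : vecDirDeriv X φ x = 0) :
    dirDeriv X (fun y => F (φ y)) x = 0 := by
  rw [dirDeriv_eq_fderiv, fderiv_fun_comp x hF (differentiableAt_pi.2 hφ),
    ContinuousLinearMap.comp_apply, fderiv_apply_eq_vecDirDeriv hφ, hvert, map_zero]

lemma differentiableAt_mul_apply {ι κ μ : Type*} [Fintype κ]
    {A : (Fin n → ℝ) → Matrix ι κ ℝ} {B : (Fin n → ℝ) → Matrix κ μ ℝ} {x : Fin n → ℝ}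
    (hA : ∀ i j, DifferentiableAt ℝ (fun y => A y i j) x)
    (hB : ∀ i j, DifferentiableAt ℝ (fun y => B y i j) x) (i : ι) (j : μ) :
    DifferentiableAt ℝ (fun y => (A y * B y) i j) x := by
  simp only [mul_apply]
  exact DifferentiableAt.fun_sum fun k _ => (hA i k).fun_mul (hB k j)

lemma matDirDeriv_mul (X : (Fin n → ℝ) → Fin n → ℝ) {ι κ μ : Type*} [Fintype κ]
    {A : (Fin n → ℝ) → Matrix ι κ ℝ} {B : (Fin n → ℝ) → Matrix κ μ ℝ} {x : Fin n → ℝ}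
    (hA : ∀ i j, DifferentiableAt ℝ (fun y => A y i j) x)
    (hB : ∀ i j, DifferentiableAt ℝ (fun y => B y i j) x) :
    matDirDeriv X (fun y => A y * B y) x = matDirDeriv X A x * B x + A x * matDirDeriv X B x := by
  ext i j
  simp only [matDirDeriv, of_apply, Matrix.add_apply, mul_apply, ← Finset.sum_add_distrib]
  rw [dirDeriv_sum X _ fun k _ => (hA i k).fun_mul (hB k j)]
  exact Finset.sum_congr rfl fun k _ => dirDeriv_mul X (hA i k) (hB k j)

lemma matDirDeriv_smul (X : (Fin n → ℝ) → Fin n → ℝ) {ι κ : Type*}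
    {c : (Fin n → ℝ) → ℝ} {A : (Fin n → ℝ) → Matrix ι κ ℝ} {x : Fin n → ℝ}
    (hc : DifferentiableAt ℝ c x) (hA : ∀ i j, DifferentiableAt ℝ (fun y => A y i j) x) :
    matDirDeriv X (fun y => c y • A y) x = dirDeriv X c x • A x + c x • matDirDeriv X A x := by
  ext i j
  exact dirDeriv_mul X hc (hA i j)

lemma matDirDeriv_sub (X : (Fin n → ℝ) → Fin n → ℝ) {ι κ : Type*}
    {A B : (Fin n → ℝ) → Matrix ι κ ℝ} {x : Fin n → ℝ}
    (hA : ∀ i j, DifferentiableAt ℝ (fun y => A y i j) x)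
    (hB : ∀ i j, DifferentiableAt ℝ (fun y => B y i j) x) :
    matDirDeriv X (fun y => A y - B y) x = matDirDeriv X A x - matDirDeriv X B x := by
  ext i j
  exact dirDeriv_sub X (hA i j) (hB i j)

lemma matDirDeriv_vecMulVec (X : (Fin n → ℝ) → Fin n → ℝ) {ι κ : Type*}
    {a : (Fin n → ℝ) → ι → ℝ} {b : (Fin n → ℝ) → κ → ℝ} {x : Fin n → ℝ}
    (ha : ∀ i, DifferentiableAt ℝ (fun y => a y i) x)
    (hb : ∀ j, DifferentiableAt ℝ (fun y => b y j) x) :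
    matDirDeriv X (fun y => vecMulVec (a y) (b y)) x
      = vecMulVec (vecDirDeriv X a x) (b x) + vecMulVec (a x) (vecDirDeriv X b x) := by
  ext i j
  exact dirDeriv_mul X (ha i) (hb j)

lemma dirDeriv_dotProduct_mulVec (X : (Fin n → ℝ) → Fin n → ℝ)
    {a b : (Fin n → ℝ) → Fin m → ℝ} {M : (Fin n → ℝ) → Matrix (Fin m) (Fin m) ℝ}
    {x : Fin n → ℝ} (ha : ∀ i, DifferentiableAt ℝ (fun y => a y i) x)
    (hM : ∀ i j, DifferentiableAt ℝ (fun y => M y i j) x)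
    (hb : ∀ i, DifferentiableAt ℝ (fun y => b y i) x) :
    dirDeriv X (fun y => a y ⬝ᵥ M y *ᵥ b y) x
      = vecDirDeriv X a x ⬝ᵥ M x *ᵥ b x + a x ⬝ᵥ matDirDeriv X M x *ᵥ b x
        + a x ⬝ᵥ M x *ᵥ vecDirDeriv X b x := by
  have hMb : ∀ i, DifferentiableAt ℝ (fun y => (M y *ᵥ b y) i) x := fun i => by
    simpa only [mulVec, dotProduct] using
      DifferentiableAt.fun_sum fun j _ => (hM i j).fun_mul (hb j)
  have hMb' : ∀ i, dirDeriv X (fun y => (M y *ᵥ b y) i) x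
      = (matDirDeriv X M x *ᵥ b x) i + (M x *ᵥ vecDirDeriv X b x) i := by
    intro i
    simp only [vecDirDeriv, matDirDeriv, mulVec, dotProduct, of_apply, ← Finset.sum_add_distrib]
    rw [dirDeriv_sum X _ fun j _ => (hM i j).fun_mul (hb j)]
    exact Finset.sum_congr rfl fun j _ => dirDeriv_mul X (hM i j) (hb j)
  simp only [dotProduct]
  rw [dirDeriv_sum X _ fun i _ => (ha i).fun_mul (hMb i)]
  simp only [dirDeriv_mul X (ha _) (hMb _)]
  simp only [hMb', mul_add, Finset.sum_add_distrib, vecDirDeriv]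
  ring

lemma matDirDeriv_jacobian {φ : (Fin n → ℝ) → Fin m → ℝ} {X : (Fin n → ℝ) → Fin n → ℝ}
    {x : Fin n → ℝ} (hφ : ∀ α, ContDiff ℝ 2 fun y => φ y α)
    (hX : ∀ k, DifferentiableAt ℝ (fun y => X y k) x) (hvert : ∀ y, vecDirDeriv X φ y = 0) :
    matDirDeriv X (jacobian φ) x = -(jacobian φ x * jacobian X x) := by
  ext α i
  have hφ' : ∀ k, DifferentiableAt ℝ (fun y => pd (fun z => φ z α) k y) x :=
    fun k => (differentiable_pd (hφ α) k).differentiableAt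
  have hzero : pd (fun y => vecDirDeriv X φ y α) i x = 0 := by
    simp only [hvert, Pi.zero_apply, pd_eq_dirDeriv, dirDeriv_const]
  simp only [vecDirDeriv, dirDeriv] at hzero
  rw [pd_eq_dirDeriv, dirDeriv_sum _ _ fun k _ => (hX k).fun_mul (hφ' k)] at hzero
  simp only [dirDeriv_mul _ (hX _) (hφ' _), ← pd_eq_dirDeriv, Finset.sum_add_distrib,
    mul_comm (pd (fun y => X y _) i x)] at hzero
  unfold matDirDeriv jacobian
  simp only [dirDeriv, of_apply, Matrix.neg_apply, mul_apply, pd_pd_comm (hφ α) _ i]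
  linear_combination hzero

end DirectionalDerivative

section LieDerivative

variable {n m : ℕ}

def lieDeriv (X : (Fin n → ℝ) → Fin n → ℝ) (T : (Fin n → ℝ) → Matrix (Fin n) (Fin n) ℝ)
    (x : Fin n → ℝ) : Matrix (Fin n) (Fin n) ℝ :=
  Matrix.of fun i j => lieD T X i j x

lemma lieDeriv_eq (X : (Fin n → ℝ) → Fin n → ℝ) (T : (Fin n → ℝ) → Matrix (Fin n) (Fin n) ℝ)
    (x : Fin n → ℝ) :
    lieDeriv X T x = matDirDeriv X T x + (jacobian X x)ᵀ * T x + T x * jacobian X x := by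
  ext i j
  unfold lieDeriv lieD matDirDeriv jacobian
  simp only [dirDeriv, Matrix.add_apply, of_apply, mul_apply, transpose_apply, mul_comm (T x _ _)]

lemma lieDeriv_smul {X : (Fin n → ℝ) → Fin n → ℝ} {c : (Fin n → ℝ) → ℝ}
    {T : (Fin n → ℝ) → Matrix (Fin n) (Fin n) ℝ} {x : Fin n → ℝ} (hc : DifferentiableAt ℝ c x)
    (hT : ∀ i j, DifferentiableAt ℝ (fun y => T y i j) x) :
    lieDeriv X (fun y => c y • T y) x = dirDeriv X c x • T x + c x • lieDeriv X T x := by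
  simp only [lieDeriv_eq]
  rw [matDirDeriv_smul X hc hT, Matrix.mul_smul, Matrix.smul_mul]
  module

lemma lieDeriv_sub {X : (Fin n → ℝ) → Fin n → ℝ} {T S : (Fin n → ℝ) → Matrix (Fin n) (Fin n) ℝ}
    {x : Fin n → ℝ} (hT : ∀ i j, DifferentiableAt ℝ (fun y => T y i j) x)
    (hS : ∀ i j, DifferentiableAt ℝ (fun y => S y i j) x) :
    lieDeriv X (fun y => T y - S y) x = lieDeriv X T x - lieDeriv X S x := by
  simp only [lieDeriv_eq]
  rw [matDirDeriv_sub X hT hS, Matrix.mul_sub, Matrix.sub_mul]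
  abel

lemma dotProduct_lieDeriv_vecMulVec_self_mulVec {X : (Fin n → ℝ) → Fin n → ℝ}
    {w : (Fin n → ℝ) → Fin n → ℝ} {x : Fin n → ℝ} (hw : ∀ i, DifferentiableAt ℝ (fun y => w y i) x)
    {e : Fin n → ℝ} (he : w x ⬝ᵥ e = 0) :
    e ⬝ᵥ lieDeriv X (fun y => vecMulVec (w y) (w y)) x *ᵥ e = 0 := by
  simp only [lieDeriv_eq]
  rw [matDirDeriv_vecMulVec X hw hw]
  simp [add_mulVec, ← mulVec_mulVec, vecMulVec_mulVec, dotProduct_comm _ (w x), he]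

def pullback (h : (Fin m → ℝ) → Matrix (Fin m) (Fin m) ℝ) (φ : (Fin n → ℝ) → Fin m → ℝ)
    (y : Fin n → ℝ) : Matrix (Fin n) (Fin n) ℝ :=
  (jacobian φ y)ᵀ * h (φ y) * jacobian φ y

lemma lieDeriv_pullback {h : (Fin m → ℝ) → Matrix (Fin m) (Fin m) ℝ}
    {φ : (Fin n → ℝ) → Fin m → ℝ} {X : (Fin n → ℝ) → Fin n → ℝ} {x : Fin n → ℝ}
    (hh : ∀ α β, DifferentiableAt ℝ (fun z => h z α β) (φ x))
    (hφ : ∀ α, ContDiff ℝ 2 fun y => φ y α)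
    (hX : ∀ k, DifferentiableAt ℝ (fun y => X y k) x) (hvert : ∀ y, vecDirDeriv X φ y = 0) :
    lieDeriv X (pullback h φ) x = 0 := by
  have hφx : ∀ α, DifferentiableAt ℝ (fun y => φ y α) x := fun α =>
    ((hφ α).differentiable (by norm_num)).differentiableAt
  have hJ : ∀ α i, DifferentiableAt ℝ (fun y => jacobian φ y α i) x := fun α i =>
    (differentiable_pd (hφ α) i).differentiableAt
  have hJt : ∀ i α, DifferentiableAt ℝ (fun y => (jacobian φ y)ᵀ i α) x := fun i α => hJ α i
  have hH : ∀ α β, DifferentiableAt ℝ (fun y => h (φ y) α β) x := fun α β =>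
    (hh α β).comp x (differentiableAt_pi.2 hφx)
  have hH0 : matDirDeriv X (fun y => h (φ y)) x = 0 := by
    ext α β
    exact dirDeriv_comp_eq_zero hφx (hh α β) (hvert x)
  have hJt' : matDirDeriv X (fun y => (jacobian φ y)ᵀ) x = (matDirDeriv X (jacobian φ) x)ᵀ :=
    rfl
  rw [lieDeriv_eq]
  unfold pullback
  rw [matDirDeriv_mul X (differentiableAt_mul_apply hJt hH) hJ, matDirDeriv_mul X hJt hH, hJt',
    hH0, matDirDeriv_jacobian hφ hX hvert]
  simp only [transpose_neg, transpose_mul, Matrix.mul_neg, Matrix.neg_mul, Matrix.mul_zero,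
    add_zero, Matrix.mul_assoc]
  abel

end LieDerivative

section LeviCivita

variable {n : ℕ}

lemma mulVec_christoffel {g : (Fin n → ℝ) → Matrix (Fin n) (Fin n) ℝ} {x : Fin n → ℝ}
    (hinv : g x * ginv g x = 1) (i j : Fin n) :
    g x *ᵥ (fun k => christoffel g k i j x) = fun l => (1 / 2) * (pd (fun y => g y l j) i x
      + pd (fun y => g y l i) j x - pd (fun y => g y i j) l x) := by
  have hΓ : (fun k => christoffel g k i j x) = (1 / 2 : ℝ) • (ginv g x *ᵥ fun l =>
      pd (fun y => g y l j) i x + pd (fun y => g y l i) j x - pd (fun y => g y i j) l x) := rfl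
  rw [hΓ, mulVec_smul, mulVec_mulVec, hinv, one_mulVec]
  rfl

lemma dotProduct_mulVec_christoffel {g : (Fin n → ℝ) → Matrix (Fin n) (Fin n) ℝ}
    {X U : (Fin n → ℝ) → Fin n → ℝ} {x : Fin n → ℝ} (hinv : g x * ginv g x = 1) :
    U x ⬝ᵥ g x *ᵥ (fun k => ∑ i, ∑ j, christoffel g k i j x * X x i * X x j)
      = U x ⬝ᵥ matDirDeriv X g x *ᵥ X x - (1 / 2) * (X x ⬝ᵥ matDirDeriv U g x *ᵥ X x) := by
  have hsum : (fun k => ∑ i, ∑ j, christoffel g k i j x * X x i * X x j)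
      = ∑ i, ∑ j, (X x i * X x j) • fun k => christoffel g k i j x := by
    ext k
    simp only [Finset.sum_apply, Pi.smul_apply, smul_eq_mul]
    exact Finset.sum_congr rfl fun i _ => Finset.sum_congr rfl fun j _ => by ring
  simp only [hsum, mulVec_sum, mulVec_smul, mulVec_christoffel hinv, dotProduct_sum,
    dotProduct_smul, smul_eq_mul]
  simp only [dotProduct, mulVec, matDirDeriv, dirDeriv, of_apply, Finset.mul_sum, Finset.sum_mul,
    mul_sub, mul_add, Finset.sum_add_distrib, Finset.sum_sub_distrib]
  have hswap : ∀ f : Fin n → Fin n → Fin n → ℝ,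
      ∑ a, ∑ b, ∑ c, f a b c = ∑ a, ∑ b, ∑ c, f b a c := fun f => Finset.sum_comm
  rw [hswap (fun a b c => X x a * X x b * (U x c * (1 / 2 * pd (fun y => g y c a) b x))),
    sum_comm_rev (fun a b c => U x a * (X x c * pd (fun y => g y a b) c x * X x b))]
  simp only [← Finset.sum_add_distrib, ← Finset.sum_sub_distrib]
  exact Finset.sum_congr rfl fun a _ => Finset.sum_congr rfl fun b _ =>
    Finset.sum_congr rfl fun c _ => by ring

lemma dotProduct_mulVec_covD_self {g : (Fin n → ℝ) → Matrix (Fin n) (Fin n) ℝ}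
    {X U : (Fin n → ℝ) → Fin n → ℝ} {x : Fin n → ℝ}
    (hsymm : ∀ y, (g y)ᵀ = g y) (hinv : g x * ginv g x = 1)
    (hg : ∀ i j, DifferentiableAt ℝ (fun y => g y i j) x)
    (hX : ∀ k, DifferentiableAt ℝ (fun y => X y k) x)
    (hU : ∀ k, DifferentiableAt ℝ (fun y => U y k) x)
    (horth : ∀ y, X y ⬝ᵥ g y *ᵥ U y = 0) :
    U x ⬝ᵥ g x *ᵥ covD g X X x = -(1 / 2) * (X x ⬝ᵥ lieDeriv U g x *ᵥ X x) := by
  have hcovD : covD g X X x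
      = vecDirDeriv X X x + fun k => ∑ i, ∑ j, christoffel g k i j x * X x i * X x j := rfl
  have horth' : vecDirDeriv X X x ⬝ᵥ g x *ᵥ U x + X x ⬝ᵥ matDirDeriv X g x *ᵥ U x
      + X x ⬝ᵥ g x *ᵥ vecDirDeriv X U x = 0 := by
    rw [← dirDeriv_dotProduct_mulVec X hX hg hU]
    simp only [horth, dirDeriv_const]
  have hXg : (matDirDeriv X g x)ᵀ = matDirDeriv X g x := by
    ext i j
    unfold matDirDeriv
    simp only [transpose_apply, of_apply]
    congr 1
    funext y
    rw [← transpose_apply (g y), hsymm y]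
  have hXU : vecDirDeriv X U x = jacobian U x *ᵥ X x := by
    ext k
    simp only [vecDirDeriv, dirDeriv, jacobian, mulVec, dotProduct, of_apply, mul_comm]
  have hlie : X x ⬝ᵥ (jacobian U x)ᵀ *ᵥ g x *ᵥ X x = X x ⬝ᵥ g x *ᵥ jacobian U x *ᵥ X x := by
    rw [mulVec_transpose, dotProduct_comm, ← dotProduct_mulVec,
      dotProduct_mulVec_comm_of_transpose_eq (hsymm x), dotProduct_comm]
  rw [hcovD, mulVec_add, dotProduct_add, dotProduct_mulVec_christoffel hinv,
    dotProduct_mulVec_comm_of_transpose_eq (hsymm x) (U x),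
    dotProduct_mulVec_comm_of_transpose_eq hXg (U x)]
  simp only [lieDeriv_eq]
  rw [add_mulVec, add_mulVec, dotProduct_add, dotProduct_add, ← mulVec_mulVec, ← mulVec_mulVec,
    hlie, ← hXU]
  linear_combination horth'

end LeviCivita

section Application

variable {n : ℕ}

lemma IsMetric.mul_ginv {g : (Fin n → ℝ) → Matrix (Fin n) (Fin n) ℝ} (hg : IsMetric g)
    (y : Fin n → ℝ) : g y * ginv g y = 1 :=
  mul_nonsing_inv _ ((isUnit_iff_isUnit_det _).mp (hg.2 y).2.isUnit)

lemma IsMetric.differentiableAt {g : (Fin n → ℝ) → Matrix (Fin n) (Fin n) ℝ} (hg : IsMetric g)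
    (i j : Fin n) (y : Fin n → ℝ) : DifferentiableAt ℝ (fun y => g y i j) y :=
  ((hg.1 i j).differentiable (by simp)).differentiableAt

lemma SmoothVF.differentiableAt {X : (Fin n → ℝ) → Fin n → ℝ} (hX : SmoothVF X) (k : Fin n)
    (y : Fin n → ℝ) : DifferentiableAt ℝ (fun y => X y k) y :=
  ((hX k).differentiable (by simp)).differentiableAt

lemma dotProduct_lieDeriv_mulVec_eq_neg_two_dirDeriv_log
    {g : (Fin n → ℝ) → Matrix (Fin n) (Fin n) ℝ} {lam : (Fin n → ℝ) → ℝ}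
    {U w : (Fin n → ℝ) → Fin n → ℝ} {x e : Fin n → ℝ}
    (hlam : DifferentiableAt ℝ lam x) (hpos : lam x ≠ 0)
    (hg : ∀ i j, DifferentiableAt ℝ (fun y => g y i j) x)
    (hw : ∀ i, DifferentiableAt ℝ (fun y => w y i) x)
    (hlie : lieDeriv U (fun y => lam y ^ 2 • (g y - vecMulVec (w y) (w y))) x = 0)
    (he : e ⬝ᵥ g x *ᵥ e = 1) (hwe : w x ⬝ᵥ e = 0) :
    e ⬝ᵥ lieDeriv U g x *ᵥ e = -2 * dirDeriv U (fun y => Real.log (lam y)) x := by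
  have hww : ∀ i j, DifferentiableAt ℝ (fun y => vecMulVec (w y) (w y) i j) x :=
    fun i j => (hw i).fun_mul (hw j)
  have hlam2 : dirDeriv U (fun y => lam y ^ 2) x = 2 * lam x * dirDeriv U lam x := by
    simp only [sq, dirDeriv_mul U hlam hlam]
    ring
  rw [lieDeriv_smul (T := fun y => g y - vecMulVec (w y) (w y)) (hlam.fun_pow 2)
    fun i j => (hg i j).sub (hww i j), lieDeriv_sub hg hww] at hlie
  have hcontract := congrArg (fun M => e ⬝ᵥ M *ᵥ e) hlie
  simp only [add_mulVec, smul_mulVec, sub_mulVec, dotProduct_add, dotProduct_smul,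
    dotProduct_sub, he, vecMulVec_mulVec, hwe, dotProduct_lieDeriv_vecMulVec_self_mulVec hw hwe,
    hlam2, MulOpposite.op_zero, zero_smul, smul_eq_mul, sub_zero, mul_one, zero_mulVec,
    dotProduct_zero] at hcontract
  rw [dirDeriv_log hlam hpos]
  field_simp
  apply mul_left_cancel₀ hpos
  linear_combination hcontract

lemma dotProduct_mulVec_covD_self_eq_dirDeriv_log {g : (Fin n → ℝ) → Matrix (Fin n) (Fin n) ℝ}
    {lam : (Fin n → ℝ) → ℝ} {U e : (Fin n → ℝ) → Fin n → ℝ} {x : Fin n → ℝ}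
    (hsymm : ∀ y, (g y)ᵀ = g y) (hinv : g x * ginv g x = 1)
    (hg : ∀ i j, DifferentiableAt ℝ (fun y => g y i j) x) (hlam : DifferentiableAt ℝ lam x)
    (hpos : lam x ≠ 0) (hU : ∀ k, DifferentiableAt ℝ (fun y => U y k) x)
    (he : ∀ k, DifferentiableAt ℝ (fun y => e y k) x)
    (hlie : lieDeriv U (fun y => lam y ^ 2 • (g y - vecMulVec (g y *ᵥ U y) (g y *ᵥ U y))) x = 0)
    (hunit : e x ⬝ᵥ g x *ᵥ e x = 1) (hperp : ∀ y, e y ⬝ᵥ g y *ᵥ U y = 0) :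
    U x ⬝ᵥ g x *ᵥ covD g e e x = dirDeriv U (fun y => Real.log (lam y)) x := by
  have hw : ∀ i, DifferentiableAt ℝ (fun y => (g y *ᵥ U y) i) x := fun i => by
    simpa only [mulVec, dotProduct] using
      DifferentiableAt.fun_sum fun j _ => (hg i j).fun_mul (hU j)
  rw [dotProduct_mulVec_covD_self hsymm hinv hg he hU hperp,
    dotProduct_lieDeriv_mulVec_eq_neg_two_dirDeriv_log hlam hpos hg hw hlie hunit
      (by rw [dotProduct_comm, hperp x])]
  ring

end Application

lemma Vertical.vecDirDeriv_eq_zero {φ : (Fin 3 → ℝ) → Fin 2 → ℝ} {U : (Fin 3 → ℝ) → Fin 3 → ℝ}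
    (hvert : Vertical φ U) (y : Fin 3 → ℝ) : vecDirDeriv U φ y = 0 :=
  funext fun α => by simpa only [vecDirDeriv, dirDeriv, mul_comm, Pi.zero_apply] using hvert y α

lemma pullback_eq_sq_smul_horizontal {g : (Fin 3 → ℝ) → Matrix (Fin 3) (Fin 3) ℝ}
    {h : (Fin 2 → ℝ) → Matrix (Fin 2) (Fin 2) ℝ} {φ : (Fin 3 → ℝ) → Fin 2 → ℝ}
    {lam : (Fin 3 → ℝ) → ℝ} {U : (Fin 3 → ℝ) → Fin 3 → ℝ} {y : Fin 3 → ℝ} {e₁ e₂ : Fin 3 → ℝ}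
    (hGs : (g y)ᵀ = g y) (hGinv : g y * ginv g y = 1) (hHinv : h (φ y) * ginv h (φ y) = 1)
    (hlam : lam y ≠ 0) (hsc : SemiConformal g h φ lam) (hvert : Vertical φ U)
    (huu : U y ⬝ᵥ g y *ᵥ U y = 1) (h₁₁ : e₁ ⬝ᵥ g y *ᵥ e₁ = 1) (h₂₂ : e₂ ⬝ᵥ g y *ᵥ e₂ = 1)
    (h₁₂ : e₁ ⬝ᵥ g y *ᵥ e₂ = 0) (h₁u : e₁ ⬝ᵥ g y *ᵥ U y = 0) (h₂u : e₂ ⬝ᵥ g y *ᵥ U y = 0) :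
    pullback h φ y = lam y ^ 2 • (g y - vecMulVec (g y *ᵥ U y) (g y *ᵥ U y)) := by
  have hJu : jacobian φ y *ᵥ U y = 0 := funext (hvert y)
  have hJ : jacobian φ y * (g y)⁻¹ * (jacobian φ y)ᵀ = lam y ^ 2 • ginv h (φ y) := by
    ext α β
    rw [mul_mul_transpose_apply]
    exact hsc y α β
  have hF := horizontal_frame_completeness hGs huu h₁₁ h₂₂ h₁₂ h₁u h₂u
  rw [← transpose_transpose (of ![e₁, e₂])] at hF
  exact transpose_mul_mul_eq_of_mul_inv_mul_transpose_eq (pow_ne_zero 2 hlam) hGs hGinv hF hJu hJ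
    hHinv

/-- For a submersive semi-conformal `φ : (M³,g) → (N²,h)` with dilation `λ`,
the mean curvature `(1/2) g(U, ∇_{e₁}e₁ + ∇_{e₂}e₂)` of the horizontal distribution equals
`U(ln λ)`, for any orthonormal horizontal frame `{e₁, e₂}`. -/
theorem horizontal_mean_curvature_eq_U_log_dilation
    (g : (Fin 3 → ℝ) → Matrix (Fin 3) (Fin 3) ℝ)
    (h : (Fin 2 → ℝ) → Matrix (Fin 2) (Fin 2) ℝ)
    (φ : (Fin 3 → ℝ) → Fin 2 → ℝ) (lam : (Fin 3 → ℝ) → ℝ)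
    (U e₁ e₂ : (Fin 3 → ℝ) → Fin 3 → ℝ)
    (hg : IsMetric g) (hh : IsMetric h)
    (hφ : ∀ α, ContDiff ℝ (⊤ : ℕ∞) fun x => φ x α)
    (hlam : ContDiff ℝ (⊤ : ℕ∞) lam) (hlampos : ∀ x, 0 < lam x)
    (hsc : SemiConformal g h φ lam)
    (hU : SmoothVF U) (hUvert : Vertical φ U) (hUunit : UnitField g U)
    (he₁ : SmoothVF e₁) (he₂ : SmoothVF e₂)
    (hortho : ∀ x, (∑ i, ∑ j, g x i j * e₁ x i * e₁ x j) = 1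
      ∧ (∑ i, ∑ j, g x i j * e₂ x i * e₂ x j) = 1
      ∧ (∑ i, ∑ j, g x i j * e₁ x i * e₂ x j) = 0)
    (hhor : ∀ x, (∑ i, ∑ j, g x i j * e₁ x i * U x j) = 0
      ∧ (∑ i, ∑ j, g x i j * e₂ x i * U x j) = 0) :
    ∀ x,
      (1 / 2) * (∑ j, ∑ k, g x j k * U x j * (covD g e₁ e₁ x k + covD g e₂ e₂ x k))
        = ∑ k, U x k * pd (fun y => Real.log (lam y)) k x := by
  intro x
  simp only [UnitField, sum_sum_mul_mul_eq_dotProduct_mulVec] at hUunit hortho hhor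
  have hpull : pullback h φ = fun y => lam y ^ 2 • (g y - vecMulVec (g y *ᵥ U y) (g y *ᵥ U y)) :=
    funext fun y => pullback_eq_sq_smul_horizontal (hg.2 y).1 (hg.mul_ginv y) (hh.mul_ginv _)
      (hlampos y).ne' hsc hUvert (hUunit y) (hortho y).1 (hortho y).2.1 (hortho y).2.2
      (hhor y).1 (hhor y).2
  have hlie := lieDeriv_pullback (x := x) (hh.differentiableAt · · _)
    (fun α => (hφ α).of_le (by norm_cast)) (hU.differentiableAt · x) hUvert.vecDirDeriv_eq_zero
  rw [hpull] at hlie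
  have hmean : ∀ e, SmoothVF e → (∀ y, e y ⬝ᵥ g y *ᵥ e y = 1) → (∀ y, e y ⬝ᵥ g y *ᵥ U y = 0) →
      U x ⬝ᵥ g x *ᵥ covD g e e x = dirDeriv U (fun y => Real.log (lam y)) x :=
    fun e he hunit hperp => dotProduct_mulVec_covD_self_eq_dirDeriv_log (fun y => (hg.2 y).1)
      (hg.mul_ginv x) (hg.differentiableAt · · x) ((hlam.differentiable (by simp)).differentiableAt)
      (hlampos x).ne' (hU.differentiableAt · x) (he.differentiableAt · x) hlie (hunit x) hperp
  have hsum := sum_sum_mul_mul_eq_dotProduct_mulVec (g x) (U x) (covD g e₁ e₁ x + covD g e₂ e₂ x)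
  simp only [Pi.add_apply] at hsum
  rw [hsum, mulVec_add, dotProduct_add, hmean e₁ he₁ (fun y => (hortho y).1) (fun y => (hhor y).1),
    hmean e₂ he₂ (fun y => (hortho y).2.1) (fun y => (hhor y).2)]
  unfold dirDeriv
  ring
end
end

section
/- Let φ: (M³, g̃) → (N²,h) be a submersive semi-conformal map with g̃ = (φ*h)/λ² + θ̃², where θ̃ is a 1-form with dθ̃ = Ω̃ basic and θ̃ nonvanishing on ker dφ. Then the fibres of φ are geodesics of g̃; equivalently, φ is a harmonic morphism with respect to g̃. -/
open scoped BigOperators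

noncomputable section

/-- The metric `g̃ = φ*h/λ² + θ ⊗ θ`. -/
def pullMetric (h : (Fin 2 → ℝ) → Matrix (Fin 2) (Fin 2) ℝ)
    (φ : (Fin 3 → ℝ) → Fin 2 → ℝ) (lam : (Fin 3 → ℝ) → ℝ)
    (θ : (Fin 3 → ℝ) → Fin 3 → ℝ) (x : Fin 3 → ℝ) : Matrix (Fin 3) (Fin 3) ℝ :=
  Matrix.of fun i j =>
    (1 / lam x ^ 2) *
        (∑ α, ∑ β, h (φ x) α β * pd (fun y => φ y α) i x * pd (fun y => φ y β) j x)
      + θ x i * θ x j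

/-!
For a vertical `g̃`-unit field `U` one has `θ̃(U)² = g̃(U,U) = 1`, so `s = θ̃(U)` has zero
derivative and `U♭ = g̃(U,·) = s θ̃`. For any field, Koszul's formula gives
`(∇_U U)♭ = ι_U d(U♭) + ½ d(g̃(U,U))`; for a unit field the last term vanishes, so
`(∇_U U)♭ = s ι_U dθ̃ = s ι_U φ*Ω̄ = 0` because `U` is vertical. Since `g̃` is positive
definite, `∇_U U = 0`.
-/

section PartialDerivative

variable {n : ℕ}

lemma pd_congr {f f' : (Fin n → ℝ) → ℝ} (h : ∀ y, f y = f' y) (i : Fin n) (x : Fin n → ℝ) :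
    pd f i x = pd f' i x := by
  rw [funext h]

lemma pd_const (c : ℝ) (i : Fin n) (x : Fin n → ℝ) : pd (fun _ => c) i x = 0 := by
  simp [pd]

lemma pd_mul {f f' : (Fin n → ℝ) → ℝ} {x : Fin n → ℝ} (hf : DifferentiableAt ℝ f x)
    (hf' : DifferentiableAt ℝ f' x) (i : Fin n) :
    pd (fun y => f y * f' y) i x = pd f i x * f' x + f x * pd f' i x := by
  simp [pd, fderiv_fun_mul hf hf']
  ring

lemma pd_sum {ι : Type*} (u : Finset ι) {f : ι → (Fin n → ℝ) → ℝ} {x : Fin n → ℝ}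
    (hf : ∀ j ∈ u, DifferentiableAt ℝ (f j) x) (i : Fin n) :
    pd (fun y => ∑ j ∈ u, f j y) i x = ∑ j ∈ u, pd (f j) i x := by
  simp [pd, fderiv_fun_sum hf]

lemma pd_sum_mul {f u : Fin n → (Fin n → ℝ) → ℝ} {x : Fin n → ℝ}
    (hf : ∀ k, DifferentiableAt ℝ (f k) x) (hu : ∀ k, DifferentiableAt ℝ (u k) x)
    (i : Fin n) :
    pd (fun y => ∑ k, f k y * u k y) i x =
      ∑ k, (pd (f k) i x * u k x + f k x * pd (u k) i x) := by
  rw [pd_sum _ fun k _ => (hf k).fun_mul (hu k)]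
  exact Finset.sum_congr rfl fun k _ => pd_mul (hf k) (hu k) i

lemma pd_sum_sum_mul_mul {f : Fin n → Fin n → (Fin n → ℝ) → ℝ} {u : Fin n → (Fin n → ℝ) → ℝ}
    {x : Fin n → ℝ} (hf : ∀ i j, DifferentiableAt ℝ (f i j) x)
    (hu : ∀ k, DifferentiableAt ℝ (u k) x) (m : Fin n) :
    pd (fun y => ∑ i, ∑ j, f i j y * u i y * u j y) m x =
      ∑ i, ∑ j, (pd (f i j) m x * u i x * u j x + f i j x * pd (u i) m x * u j x
        + f i j x * u i x * pd (u j) m x) := by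
  have hfu i j : DifferentiableAt ℝ (fun y => f i j y * u i y) x := (hf i j).fun_mul (hu i)
  rw [pd_sum _ fun i _ => DifferentiableAt.fun_sum fun j _ => (hfu i j).fun_mul (hu j)]
  refine Finset.sum_congr rfl fun i _ => ?_
  rw [pd_sum _ fun j _ => (hfu i j).fun_mul (hu j)]
  refine Finset.sum_congr rfl fun j _ => ?_
  rw [pd_mul (hfu i j) (hu j), pd_mul (hf i j) (hu i)]
  ring

lemma ContDiff.pd {f : (Fin n → ℝ) → ℝ} (hf : ContDiff ℝ (⊤ : ℕ∞) f) (i : Fin n) :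
    ContDiff ℝ (⊤ : ℕ∞) (pd f i) :=
  (hf.fderiv_right (m := (⊤ : ℕ∞)) (by exact_mod_cast le_rfl)).clm_apply contDiff_const

lemma pd_eq_zero_of_mul_self_eq_one {f : (Fin n → ℝ) → ℝ} {x : Fin n → ℝ}
    (hf : DifferentiableAt ℝ f x) (h : ∀ y, f y * f y = 1) (i : Fin n) : pd f i x = 0 := by
  have hsq : pd (fun y => f y * f y) i x = 0 := by rw [pd_congr h, pd_const]
  rw [pd_mul hf hf] at hsq
  have hfx : f x ≠ 0 := left_ne_zero_of_mul_eq_one (h x)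
  exact (mul_eq_zero.mp (show f x * pd f i x = 0 by linarith)).resolve_left hfx

end PartialDerivative

section LeviCivita

variable {n : ℕ} {g : (Fin n → ℝ) → Matrix (Fin n) (Fin n) ℝ} {U : (Fin n → ℝ) → Fin n → ℝ}
  {x : Fin n → ℝ}

lemma sum_mul_christoffel (hdet : IsUnit (g x).det) (m i j : Fin n) :
    ∑ k, g x m k * christoffel g k i j x =
      1 / 2 * (pd (fun y => g y m j) i x + pd (fun y => g y m i) j x
        - pd (fun y => g y i j) m x) := by
  set C : Fin n → ℝ := fun l =>
    pd (fun y => g y l j) i x + pd (fun y => g y l i) j x - pd (fun y => g y i j) l x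
  have hC : (g x).mulVec ((g x)⁻¹.mulVec C) = C := by
    rw [Matrix.mulVec_mulVec, Matrix.mul_nonsing_inv _ hdet, Matrix.one_mulVec]
  have := congrFun hC m
  simp only [Matrix.mulVec, dotProduct] at this
  simp only [christoffel, ginv, mul_left_comm _ (1 / 2 : ℝ), ← Finset.mul_sum]
  rw [this]

lemma sum_mul_covD_self_eq_sum (hdet : IsUnit (g x).det) (m : Fin n) :
    ∑ k, g x m k * covD g U U x k = ∑ i, ∑ j,
      (g x m j * U x i * pd (fun y => U y j) i x
        + 1 / 2 * (pd (fun y => g y m j) i x + pd (fun y => g y m i) j x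
          - pd (fun y => g y i j) m x) * U x i * U x j) := by
  calc ∑ k, g x m k * covD g U U x k
      = ∑ i, ∑ j, g x m j * U x i * pd (fun y => U y j) i x
        + ∑ i, ∑ j, (∑ k, g x m k * christoffel g k i j x) * U x i * U x j := by
        simp only [covD, mul_add, Finset.sum_add_distrib, Finset.mul_sum, Finset.sum_mul]
        congr 1
        · rw [Finset.sum_comm]
          exact Finset.sum_congr rfl fun i _ => Finset.sum_congr rfl fun j _ => by ring
        · rw [Finset.sum_comm]
          refine Finset.sum_congr rfl fun i _ => ?_
          rw [Finset.sum_comm]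
          exact Finset.sum_congr rfl fun j _ => Finset.sum_congr rfl fun k _ => by ring
    _ = _ := by
        simp only [sum_mul_christoffel hdet, ← Finset.sum_add_distrib]

lemma sum_mul_covD_self (hg : ∀ i j, DifferentiableAt ℝ (fun y => g y i j) x)
    (hU : ∀ k, DifferentiableAt ℝ (fun y => U y k) x) (hsymm : (g x).IsSymm)
    (hdet : IsUnit (g x).det) (m : Fin n) :
    ∑ k, g x m k * covD g U U x k =
      ∑ i, U x i * (pd (fun y => ∑ k, g y m k * U y k) i x
          - pd (fun y => ∑ k, g y i k * U y k) m x)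
        + 1 / 2 * pd (fun y => ∑ i, ∑ j, g y i j * U y i * U y j) m x := by
  have hflat a b := pd_sum_mul (fun k => hg a k) hU b
  have hnorm := pd_sum_sum_mul_mul hg hU m
  have hR : ∑ i, U x i * (pd (fun y => ∑ k, g y m k * U y k) i x
          - pd (fun y => ∑ k, g y i k * U y k) m x)
        + 1 / 2 * pd (fun y => ∑ i, ∑ j, g y i j * U y i * U y j) m x = ∑ i, ∑ j,
      (U x i * (pd (fun y => g y m j) i x * U x j + g x m j * pd (fun y => U y j) i x
          - pd (fun y => g y i j) m x * U x j - g x i j * pd (fun y => U y j) m x)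
        + 1 / 2 * (pd (fun y => g y i j) m x * U x i * U x j
          + g x i j * pd (fun y => U y i) m x * U x j
          + g x i j * U x i * pd (fun y => U y j) m x)) := by
    simp only [hflat, hnorm, ← Finset.sum_sub_distrib, Finset.mul_sum, ← Finset.sum_add_distrib]
    exact Finset.sum_congr rfl fun i _ => Finset.sum_congr rfl fun j _ => by ring
  have hswap_dg : ∑ i, ∑ j, pd (fun y => g y m i) j x * U x i * U x j =
      ∑ i, ∑ j, pd (fun y => g y m j) i x * U x i * U x j := by
    rw [Finset.sum_comm]
    exact Finset.sum_congr rfl fun i _ => Finset.sum_congr rfl fun j _ => by ring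
  have hswap_dU : ∑ i, ∑ j, g x i j * pd (fun y => U y i) m x * U x j =
      ∑ i, ∑ j, g x i j * U x i * pd (fun y => U y j) m x := by
    rw [Finset.sum_comm]
    refine Finset.sum_congr rfl fun i _ => Finset.sum_congr rfl fun j _ => ?_
    rw [hsymm.apply i j]
    ring
  rw [sum_mul_covD_self_eq_sum hdet, hR, ← sub_eq_zero, ← Finset.sum_sub_distrib]
  calc ∑ i, (∑ j, _ - ∑ j, _)
      = 1 / 2 * (∑ i, ∑ j, pd (fun y => g y m i) j x * U x i * U x j
          - ∑ i, ∑ j, pd (fun y => g y m j) i x * U x i * U x j)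
        + 1 / 2 * (∑ i, ∑ j, g x i j * U x i * pd (fun y => U y j) m x
          - ∑ i, ∑ j, g x i j * pd (fun y => U y i) m x * U x j) := by
        simp only [← Finset.sum_sub_distrib, Finset.mul_sum, ← Finset.sum_add_distrib]
        exact Finset.sum_congr rfl fun i _ => Finset.sum_congr rfl fun j _ => by ring
    _ = 0 := by rw [hswap_dg, hswap_dU]; ring

end LeviCivita

lemma star_dotProduct_mulVec_eq_sum {ι : Type*} [Fintype ι] (A : Matrix ι ι ℝ) (v : ι → ℝ) :
    star v ⬝ᵥ A.mulVec v = ∑ i, ∑ j, A i j * v i * v j := by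
  simp only [dotProduct, Matrix.mulVec, Pi.star_apply, star_trivial, Finset.mul_sum]
  exact Finset.sum_congr rfl fun i _ => Finset.sum_congr rfl fun j _ => by ring

lemma sum_mul_curl_eq_zero_of_vertical {n : ℕ} {φ : (Fin n → ℝ) → Fin 2 → ℝ}
    {θ : (Fin n → ℝ) → Fin n → ℝ} {ω : ℝ} {x v : Fin n → ℝ}
    (hbasic : ∀ i j, pd (fun y => θ y j) i x - pd (fun y => θ y i) j x =
      ω * (pd (fun y => φ y 0) i x * pd (fun y => φ y 1) j x
        - pd (fun y => φ y 1) i x * pd (fun y => φ y 0) j x))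
    (hv : ∀ α, ∑ i, pd (fun y => φ y α) i x * v i = 0) (m : Fin n) :
    ∑ i, v i * (pd (fun y => θ y m) i x - pd (fun y => θ y i) m x) = 0 := by
  calc ∑ i, v i * (pd (fun y => θ y m) i x - pd (fun y => θ y i) m x)
      = ω * ((∑ i, pd (fun y => φ y 0) i x * v i) * pd (fun y => φ y 1) m x
          - (∑ i, pd (fun y => φ y 1) i x * v i) * pd (fun y => φ y 0) m x) := by
        simp only [hbasic, Finset.sum_mul, ← Finset.sum_sub_distrib, Finset.mul_sum]
        exact Finset.sum_congr rfl fun i _ => by ring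
    _ = 0 := by rw [hv 0, hv 1]; ring

section PullMetric

variable (h : (Fin 2 → ℝ) → Matrix (Fin 2) (Fin 2) ℝ) (φ : (Fin 3 → ℝ) → Fin 2 → ℝ)
  (lam : (Fin 3 → ℝ) → ℝ) (θ : (Fin 3 → ℝ) → Fin 3 → ℝ)

lemma pullMetric_bilin (x v w : Fin 3 → ℝ) :
    ∑ i, ∑ j, pullMetric h φ lam θ x i j * v i * w j =
      1 / lam x ^ 2 * ∑ α, ∑ β, h (φ x) α β *
          (∑ i, pd (fun y => φ y α) i x * v i) * (∑ j, pd (fun y => φ y β) j x * w j)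
        + (∑ i, θ x i * v i) * (∑ j, θ x j * w j) := by
  simp only [pullMetric, Matrix.of_apply, Fin.sum_univ_three, Fin.sum_univ_two]
  ring

lemma sum_pullMetric_mul_of_vertical {x v : Fin 3 → ℝ}
    (hv : ∀ α, ∑ i, pd (fun y => φ y α) i x * v i = 0) (m : Fin 3) :
    ∑ k, pullMetric h φ lam θ x m k * v k = (∑ k, θ x k * v k) * θ x m := by
  have hv0 := hv 0
  have hv1 := hv 1
  simp only [pullMetric, Matrix.of_apply, Fin.sum_univ_three, Fin.sum_univ_two] at hv0 hv1 ⊢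
  linear_combination (1 / lam x ^ 2) * ((h (φ x) 0 0 * pd (fun y => φ y 0) m x
      + h (φ x) 1 0 * pd (fun y => φ y 1) m x) * hv0
    + (h (φ x) 0 1 * pd (fun y => φ y 0) m x + h (φ x) 1 1 * pd (fun y => φ y 1) m x) * hv1)

variable {h φ lam θ}

lemma pullMetric_isSymm {x : Fin 3 → ℝ} (hh : (h (φ x)).IsSymm) :
    (pullMetric h φ lam θ x).IsSymm := by
  refine Matrix.IsSymm.ext fun i j => ?_
  simp only [pullMetric, Matrix.of_apply, Fin.sum_univ_two, hh.apply 0 1]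
  ring

lemma pullMetric_posDef {x : Fin 3 → ℝ} (hh : (h (φ x)).PosDef) (hlam : lam x ≠ 0)
    (hθ : ∀ v : Fin 3 → ℝ, v ≠ 0 →
      (∀ α, ∑ i, pd (fun y => φ y α) i x * v i = 0) → ∑ j, θ x j * v j ≠ 0) :
    (pullMetric h φ lam θ x).PosDef := by
  refine Matrix.PosDef.of_dotProduct_mulVec_pos
    (Matrix.isHermitian_iff_isSymm.mpr
      (pullMetric_isSymm (Matrix.isHermitian_iff_isSymm.mp hh.isHermitian))) fun v hv => ?_
  rw [star_dotProduct_mulVec_eq_sum, pullMetric_bilin]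
  set dφv : Fin 2 → ℝ := fun α => ∑ i, pd (fun y => φ y α) i x * v i
  by_cases hvert : ∀ α, dφv α = 0
  · simp only [dφv] at hvert
    simp only [hvert, mul_zero, Finset.sum_const_zero, zero_add]
    exact mul_self_pos.mpr (hθ v hv hvert)
  · have hhor : 0 < ∑ α, ∑ β, h (φ x) α β * dφv α * dφv β := by
      rw [← star_dotProduct_mulVec_eq_sum]
      exact hh.dotProduct_mulVec_pos fun h0 => hvert (congrFun h0)
    have hc : 0 < 1 / lam x ^ 2 := by positivity
    nlinarith [mul_pos hc hhor, mul_self_nonneg (∑ j, θ x j * v j)]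

lemma pullMetric_contDiff (hh : ∀ α β, ContDiff ℝ (⊤ : ℕ∞) fun y => h y α β)
    (hφ : ∀ α, ContDiff ℝ (⊤ : ℕ∞) fun x => φ x α) (hlam : ContDiff ℝ (⊤ : ℕ∞) lam)
    (hlam0 : ∀ x, lam x ≠ 0) (hθ : SmoothVF θ) (i j : Fin 3) :
    ContDiff ℝ (⊤ : ℕ∞) fun x => pullMetric h φ lam θ x i j := by
  have hhφ : ∀ α β, ContDiff ℝ (⊤ : ℕ∞) fun x => h (φ x) α β :=
    fun α β => (hh α β).comp (contDiff_pi.mpr hφ)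
  exact ((contDiff_const.div (hlam.pow 2) fun x => pow_ne_zero 2 (hlam0 x)).mul
    (ContDiff.sum fun α _ => ContDiff.sum fun β _ =>
      ((hhφ α β).mul ((hφ α).pd i)).mul ((hφ β).pd j))).add ((hθ i).mul (hθ j))

end PullMetric

theorem fibres_geodesic_of_basic_integrability_form_general
    (h : (Fin 2 → ℝ) → Matrix (Fin 2) (Fin 2) ℝ)
    (φ : (Fin 3 → ℝ) → Fin 2 → ℝ) (lamN : (Fin 2 → ℝ) → ℝ)
    (θt : (Fin 3 → ℝ) → Fin 3 → ℝ) (ωb : (Fin 2 → ℝ) → ℝ)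
    (hh : IsMetric h)
    (hφ : ∀ α, ContDiff ℝ (⊤ : ℕ∞) fun x => φ x α)
    (hlam : ContDiff ℝ (⊤ : ℕ∞) lamN) (hlampos : ∀ y, 0 < lamN y)
    (hθ : SmoothVF θt)
    -- `θ̃` is nonvanishing on `ker dφ`
    (hθvert : ∀ (x : Fin 3 → ℝ) (v : Fin 3 → ℝ), v ≠ 0 →
      (∀ α, (∑ i, pd (fun y => φ y α) i x * v i) = 0) → (∑ j, θt x j * v j) ≠ 0)
    -- `dθ̃ = φ*Ω̄` with `Ω̄ = ω̄ dy¹∧dy²` a 2-form on `N`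
    (hbasic : ∀ x i j,
      pd (fun y => θt y j) i x - pd (fun y => θt y i) j x =
        ωb (φ x) * (pd (fun y => φ y 0) i x * pd (fun y => φ y 1) j x
          - pd (fun y => φ y 1) i x * pd (fun y => φ y 0) j x)) :
    ∀ Ut : (Fin 3 → ℝ) → Fin 3 → ℝ, SmoothVF Ut → Vertical φ Ut →
      UnitField (pullMetric h φ (fun x => lamN (φ x)) θt) Ut →
      ∀ x k, covD (pullMetric h φ (fun x => lamN (φ x)) θt) Ut Ut x k = 0 := by
  intro U hU hUv hUu x
  set g := pullMetric h φ (fun x => lamN (φ x)) θt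
  have hdiff {f : (Fin 3 → ℝ) → ℝ} (hf : ContDiff ℝ (⊤ : ℕ∞) f) : DifferentiableAt ℝ f x :=
    hf.differentiable (by simp) x
  have hlam0 y : lamN (φ y) ≠ 0 := (hlampos _).ne'
  have hg i j : DifferentiableAt ℝ (fun y => g y i j) x :=
    hdiff (pullMetric_contDiff hh.1 hφ (hlam.comp (contDiff_pi.mpr hφ)) hlam0 hθ i j)
  have hpos : (g x).PosDef := pullMetric_posDef (hh.2 (φ x)).2 (hlam0 x) (hθvert x)
  set s : (Fin 3 → ℝ) → ℝ := fun y => ∑ j, θt y j * U y j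
  have hsx : DifferentiableAt ℝ s x := hdiff (ContDiff.sum fun j _ => (hθ j).mul (hU j))
  have hflat m y : ∑ k, g y m k * U y k = s y * θt y m :=
    sum_pullMetric_mul_of_vertical h φ _ θt (hUv y) m
  have hs y : s y * s y = 1 := by
    simpa [g, s, pullMetric_bilin, hUv y] using hUu y
  have hds i : pd s i x = 0 := pd_eq_zero_of_mul_self_eq_one hsx hs i
  have hcurl m i : pd (fun y => ∑ k, g y m k * U y k) i x
      - pd (fun y => ∑ k, g y i k * U y k) m x =
        s x * (pd (fun y => θt y m) i x - pd (fun y => θt y i) m x) := by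
    rw [pd_congr (hflat m), pd_congr (hflat i), pd_mul hsx (hdiff (hθ m)),
      pd_mul hsx (hdiff (hθ i)), hds, hds]
    ring
  have hcontr m : ∑ k, g x m k * covD g U U x k = 0 := by
    rw [sum_mul_covD_self hg (fun k => hdiff (hU k))
      (Matrix.isHermitian_iff_isSymm.mp hpos.isHermitian)
      ((Matrix.isUnit_iff_isUnit_det _).mp hpos.isUnit), pd_congr hUu, pd_const]
    simp only [hcurl, mul_left_comm _ (s x), ← Finset.mul_sum,
      sum_mul_curl_eq_zero_of_vertical (hbasic x) (hUv x), mul_zero, add_zero]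
  exact congrFun (Matrix.eq_zero_of_mulVec_eq_zero hpos.det_pos.ne' (funext hcontr))

/-- If `g̃ = φ*h/λ² + θ̃²` with `λ` basic and `dθ̃` basic
(`dθ̃ = φ*Ω̄`), and `θ̃` nonvanishing on `ker dφ`, then the fibres of `φ` are geodesics of
`g̃`; equivalently `φ : (M³,g̃) → (N²,h)` is a harmonic morphism. -/
theorem fibres_geodesic_of_basic_integrability_form
    (h : (Fin 2 → ℝ) → Matrix (Fin 2) (Fin 2) ℝ)
    (φ : (Fin 3 → ℝ) → Fin 2 → ℝ) (lamN : (Fin 2 → ℝ) → ℝ)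
    (θt : (Fin 3 → ℝ) → Fin 3 → ℝ) (ωb : (Fin 2 → ℝ) → ℝ)
    (hh : IsMetric h)
    (hφ : ∀ α, ContDiff ℝ (⊤ : ℕ∞) fun x => φ x α)
    (hsub : ∀ x, Function.Surjective fun v : Fin 3 → ℝ =>
      (fun α => ∑ i, pd (fun y => φ y α) i x * v i : Fin 2 → ℝ))
    (hlam : ContDiff ℝ (⊤ : ℕ∞) lamN) (hlampos : ∀ y, 0 < lamN y)
    (hθ : SmoothVF θt)
    (hω : ContDiff ℝ (⊤ : ℕ∞) ωb)
    -- `θ̃` is nonvanishing on `ker dφ`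
    (hθvert : ∀ (x : Fin 3 → ℝ) (v : Fin 3 → ℝ), v ≠ 0 →
      (∀ α, (∑ i, pd (fun y => φ y α) i x * v i) = 0) → (∑ j, θt x j * v j) ≠ 0)
    -- `dθ̃ = φ*Ω̄` with `Ω̄ = ω̄ dy¹∧dy²` a 2-form on `N`
    (hbasic : ∀ x i j,
      pd (fun y => θt y j) i x - pd (fun y => θt y i) j x =
        ωb (φ x) * (pd (fun y => φ y 0) i x * pd (fun y => φ y 1) j x
          - pd (fun y => φ y 1) i x * pd (fun y => φ y 0) j x)) :
    ∀ Ut : (Fin 3 → ℝ) → Fin 3 → ℝ, SmoothVF Ut → Vertical φ Ut →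
      UnitField (pullMetric h φ (fun x => lamN (φ x)) θt) Ut →
      ∀ x k, covD (pullMetric h φ (fun x => lamN (φ x)) θt) Ut Ut x k = 0 :=
  fibres_geodesic_of_basic_integrability_form_general h φ lamN θt ωb hh hφ hlam hlampos hθ hθvert
    hbasic
end
end
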